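/- Let θ ∈ (0,π/2) and let K be a capillary convex body. Then the capillary inner radius and the classical inner radius of K satisfy (1 − cos θ)·ρ_−(K,θ) ≤ ρ_−(K) ≤ sin θ·ρ_−(K,θ). -/

import Mathlib

open MeasureTheory Real Set Filter
open scoped RealInnerProductSpace

noncomputable section

/-- Ambient Euclidean space `ℝ^{n+1}`. -/
abbrev Amb (n : ℕ) : Type := EuclideanSpace ℝ (Fin (n + 1))

/-- The `(n+1)`-st standard basis vector `E_{n+1}`. -/
def lastBasis (n : ℕ) : Amb n := EuclideanSpace.single (Fin.last n) 1

/-- The vector `e := -E_{n+1}`. -/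
def eVec (n : ℕ) : Amb n := -(lastBasis n)

/-- The closed upper half-space `\overline{ℝ^{n+1}_+}`. -/
def upperHalf (n : ℕ) : Set (Amb n) := {x | 0 ≤ x (Fin.last n)}

/-- The boundary hyperplane `∂ℝ^{n+1}_+`. -/
def hyperplane (n : ℕ) : Set (Amb n) := {x | x (Fin.last n) = 0}

/-- `ℓ(x) := sin²θ + cos θ · ⟨x, e⟩`. -/
def ell (n : ℕ) (θ : ℝ) (x : Amb n) : ℝ := sin θ ^ 2 + cos θ * ⟪x, eVec n⟫

/-- The unit spherical cap `C_θ`. -/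
def capSphere (n : ℕ) (θ : ℝ) : Set (Amb n) :=
  {ξ | ξ ∈ upperHalf n ∧ ‖ξ - cos θ • eVec n‖ = 1}

/-- The unit spherical cap body `Ĉ_θ`. -/
def capBodyUnit (n : ℕ) (θ : ℝ) : Set (Amb n) :=
  {x | x ∈ upperHalf n ∧ ‖x - cos θ • eVec n‖ ≤ 1}

/-- A capillary convex body: a compact convex subset of the closed upper half-space with
nonempty interior, whose flat part `K_f` has nonempty interior relative to the boundary
hyperplane and whose curved boundary `K_u` is nonempty. -/
structure IsCapillaryBody (n : ℕ) (K : Set (Amb n)) : Prop where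
  compact : IsCompact K
  convex : Convex ℝ K
  subset_upper : K ⊆ upperHalf n
  interior_nonempty : (interior K).Nonempty
  flat_relint_nonempty : (intrinsicInterior ℝ (K ∩ hyperplane n)).Nonempty
  curved_nonempty : (frontier K ∩ {x | 0 < x (Fin.last n)}).Nonempty

/-- Normal cone (of unit normal vectors) of `K` at `x`. -/
def normalCone (n : ℕ) (K : Set (Amb n)) (x : Amb n) : Set (Amb n) :=
  {ζ | ‖ζ‖ = 1 ∧ ∀ y ∈ K, ⟪ζ, y - x⟫ ≤ 0}

/-- A `θ`-capillary convex body: a capillary convex body with contact angle at most `θ`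
along the relative boundary of its flat part. -/
def IsThetaCapillary (n : ℕ) (θ : ℝ) (K : Set (Amb n)) : Prop :=
  IsCapillaryBody n K ∧
    ∀ x ∈ intrinsicFrontier ℝ (K ∩ hyperplane n),
      cos θ ≤ sSup ((fun ζ => ⟪ζ, lastBasis n⟫) '' normalCone n K x)

/-- Support function `h_z(ξ) := max_{y ∈ K} ⟨ξ - cos θ · e, y - z⟩`. -/
def suppFn (n : ℕ) (θ : ℝ) (K : Set (Amb n)) (z ξ : Amb n) : ℝ :=
  sSup ((fun y => ⟪ξ - cos θ • eVec n, y - z⟫) '' K)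

/-- Capillary support function `u_z := h_z / ℓ`. -/
def capSupp (n : ℕ) (θ : ℝ) (K : Set (Amb n)) (z ξ : Amb n) : ℝ :=
  suppFn n θ K z ξ / ell n θ ξ

/-- Capillary polar body `K*_z`. -/
def capPolar (n : ℕ) (θ : ℝ) (K : Set (Amb n)) (z : Amb n) : Set (Amb n) :=
  {x | ∃ r : ℝ, 0 ≤ r ∧ ∃ ξ ∈ capSphere n θ, x = z + r • ξ ∧ r * capSupp n θ K z ξ ≤ 1}

/-- Capillary area `ω_θ := ∫_{C_θ} ℓ dσ` of `C_θ` (surface measure = `n`-dimensional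
Hausdorff measure). -/
def omegaTheta (n : ℕ) (θ : ℝ) : ℝ := ∫ ξ in capSphere n θ, ell n θ ξ ∂μH[(n : ℝ)]

/-- `ℰ_θ(K, z) := (1/ω_θ) ∫_{C_θ} log(u_z) ℓ dσ`. -/
def entropyAt (n : ℕ) (θ : ℝ) (K : Set (Amb n)) (z : Amb n) : ℝ :=
  (1 / omegaTheta n θ) *
    ∫ ξ in capSphere n θ, Real.log (capSupp n θ K z ξ) * ell n θ ξ ∂μH[(n : ℝ)]

/-- Capillary entropy `ℰ_θ(K)`: supremum of `ℰ_θ(K, z)` over `z` in the relative interior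
of the flat part `K_f`. -/
def capEntropy (n : ℕ) (θ : ℝ) (K : Set (Amb n)) : ℝ :=
  sSup (entropyAt n θ K '' intrinsicInterior ℝ (K ∩ hyperplane n))

/-- The spherical cap body `Ĉ_{r,θ}(x₀)`. -/
def capBodyAt (n : ℕ) (θ r : ℝ) (x₀ : Amb n) : Set (Amb n) :=
  {x | x ∈ upperHalf n ∧ ‖x - (x₀ + (r * cos θ) • eVec n)‖ ≤ r}

/-- Capillary inner radius `ρ₋(K, θ)`. -/
def capInRadius (n : ℕ) (θ : ℝ) (K : Set (Amb n)) : ℝ :=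
  sSup {r : ℝ | 0 < r ∧ ∃ x₀ ∈ hyperplane n, capBodyAt n θ r x₀ ⊆ K}

/-- Capillary outer radius `ρ₊(K, θ)`. -/
def capOutRadius (n : ℕ) (θ : ℝ) (K : Set (Amb n)) : ℝ :=
  sInf {r : ℝ | 0 < r ∧ ∃ x₀ ∈ hyperplane n, K ⊆ capBodyAt n θ r x₀}

/-- Classical inner radius `ρ₋(K)`. -/
def inRadius (n : ℕ) (K : Set (Amb n)) : ℝ :=
  sSup {ρ : ℝ | 0 < ρ ∧ ∃ x₀ ∈ hyperplane n, Metric.ball x₀ ρ ∩ upperHalf n ⊆ K}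

/-- Classical outer radius `ρ₊(K)`. -/
def outRadius (n : ℕ) (K : Set (Amb n)) : ℝ :=
  sInf {ρ : ℝ | 0 < ρ ∧ ∃ x₀ ∈ hyperplane n, K ⊆ Metric.ball x₀ ρ}

/-- Dual capillary gauge function `F_θ^∘`. -/
def Fdual (n : ℕ) (θ : ℝ) (x : Amb n) : ℝ :=
  (1 / sin θ) *
    (Real.sqrt (‖x‖ ^ 2 + (cos θ / sin θ) ^ 2 * ⟪eVec n, x⟫ ^ 2) -
      (cos θ / sin θ) * ⟪eVec n, x⟫)

/-- Capillary gauge function `F_θ(η) := |η| + cos θ · ⟨e, η⟩`. -/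
def Fgauge (n : ℕ) (θ : ℝ) (η : Amb n) : ℝ := ‖η‖ + cos θ * ⟪eVec n, η⟫

/-- Capillary Cahn–Hoffman map `Ψ(ξ) := (ξ - cos θ · e)/ℓ(ξ)`. -/
def cahnHoffman (n : ℕ) (θ : ℝ) (ξ : Amb n) : Amb n :=
  (ell n θ ξ)⁻¹ • (ξ - cos θ • eVec n)

/-- The ellipsoid portion `D_θ`. -/
def Dtheta (n : ℕ) (θ : ℝ) : Set (Amb n) :=
  {η | Fgauge n θ η = 1 ∧ cos θ / sin θ ^ 2 ≤ ⟪η, lastBasis n⟫}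

/-- Reflection across the boundary hyperplane `∂ℝ^{n+1}_+`. -/
def reflect (n : ℕ) (x : Amb n) : Amb n :=
  x - (2 * ⟪x, lastBasis n⟫) • lastBasis n

/-!
The cap body `Ĉ_{r,θ}(x₀)` is the part above the hyperplane of the ball of radius `r` centred
at depth `r cos θ` below `x₀`. It therefore contains the half-ball of radius `(1 - cos θ) r`
about `x₀` and is contained in the half-ball of radius `r sin θ` about `x₀`; taking suprema
over admissible radii gives both inequalities, and boundedness of `K` keeps the suprema finite.
-/

open scoped Pointwise

lemma inner_lastBasis {n : ℕ} (v : Amb n) : ⟪v, lastBasis n⟫ = v (Fin.last n) := by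
  simp [lastBasis, EuclideanSpace.inner_single_right]

lemma norm_lastBasis (n : ℕ) : ‖lastBasis n‖ = 1 := by simp [lastBasis]

lemma lastBasis_last (n : ℕ) : lastBasis n (Fin.last n) = 1 := by
  simp [lastBasis]

def inRadiusSet (n : ℕ) (K : Set (Amb n)) : Set ℝ :=
  {ρ : ℝ | 0 < ρ ∧ ∃ x₀ ∈ hyperplane n, Metric.ball x₀ ρ ∩ upperHalf n ⊆ K}

def capInRadiusSet (n : ℕ) (θ : ℝ) (K : Set (Amb n)) : Set ℝ :=
  {r : ℝ | 0 < r ∧ ∃ x₀ ∈ hyperplane n, capBodyAt n θ r x₀ ⊆ K}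

lemma inRadius_eq_sSup (n : ℕ) (K : Set (Amb n)) : inRadius n K = sSup (inRadiusSet n K) := rfl

lemma capInRadius_eq_sSup (n : ℕ) (θ : ℝ) (K : Set (Amb n)) :
    capInRadius n θ K = sSup (capInRadiusSet n θ K) := rfl

section CapBody

variable {n : ℕ} {θ r : ℝ} {x₀ : Amb n}

lemma sub_capBodyAt_center (x : Amb n) :
    x - (x₀ + (r * cos θ) • eVec n) = (x - x₀) + (r * cos θ) • lastBasis n := by
  simp only [eVec, smul_neg]
  abel

lemma ball_inter_upperHalf_subset_capBodyAt (hr : 0 ≤ r) (hc : 0 ≤ cos θ) :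
    Metric.ball x₀ ((1 - cos θ) * r) ∩ upperHalf n ⊆ capBodyAt n θ r x₀ := by
  rintro x ⟨hx, hxu⟩
  refine ⟨hxu, ?_⟩
  have hx' : ‖x - x₀‖ < (1 - cos θ) * r := by rwa [← dist_eq_norm]
  calc ‖x - (x₀ + (r * cos θ) • eVec n)‖
      ≤ ‖x - x₀‖ + ‖(r * cos θ) • lastBasis n‖ := by
        rw [sub_capBodyAt_center]; exact norm_add_le _ _
    _ = ‖x - x₀‖ + r * cos θ := by
      rw [norm_smul, norm_lastBasis, mul_one, Real.norm_of_nonneg (by positivity)]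
    _ ≤ r := by linarith

/-- The centre lies below the hyperplane and `x` above it, so expanding
`‖(x - x₀) + r cos θ · E‖² ≤ r²` gives `‖x - x₀‖² ≤ r² - (r cos θ)² = (r sin θ)²`. -/
lemma capBodyAt_subset_closedBall (hx₀ : x₀ ∈ hyperplane n) (hr : 0 ≤ r) (hc : 0 ≤ cos θ)
    (hs : 0 ≤ sin θ) : capBodyAt n θ r x₀ ⊆ Metric.closedBall x₀ (r * sin θ) := by
  rintro x ⟨hxu, hx⟩
  rw [Metric.mem_closedBall, dist_eq_norm]
  rw [sub_capBodyAt_center] at hx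
  have hheight : ⟪x - x₀, lastBasis n⟫ = x (Fin.last n) := by
    rw [inner_lastBasis, PiLp.sub_apply, show x₀ (Fin.last n) = 0 from hx₀, sub_zero]
  have hexpand : ‖(x - x₀) + (r * cos θ) • lastBasis n‖ ^ 2
      = ‖x - x₀‖ ^ 2 + 2 * (r * cos θ) * x (Fin.last n) + (r * cos θ) ^ 2 := by
    rw [norm_add_sq_real, real_inner_smul_right, hheight, norm_smul, norm_lastBasis,
      Real.norm_of_nonneg (by positivity)]
    ring
  have hheight_nonneg : 0 ≤ r * cos θ * x (Fin.last n) := mul_nonneg (by positivity) hxu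
  have hsq : ‖x - x₀‖ ^ 2 ≤ (r * sin θ) ^ 2 := by
    nlinarith [sin_sq_add_cos_sq θ, pow_le_pow_left₀ (norm_nonneg _) hx 2]
  exact (pow_le_pow_iff_left₀ (norm_nonneg _) (by positivity) two_ne_zero).1 hsq

end CapBody

lemma bddAbove_inRadiusSet {n : ℕ} {K : Set (Amb n)} (hK : Bornology.IsBounded K) :
    BddAbove (inRadiusSet n K) := by
  refine ⟨2 * Metric.diam K, ?_⟩
  rintro ρ ⟨hρ, x₀, hx₀, hsub⟩
  have hx₀l : x₀ (Fin.last n) = 0 := hx₀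
  have hdist : dist (x₀ + (ρ / 2) • lastBasis n) x₀ = ρ / 2 := by
    rw [dist_eq_norm, add_sub_cancel_left, norm_smul, norm_lastBasis, mul_one,
      Real.norm_of_nonneg (by positivity)]
  have hbase : x₀ ∈ K := hsub ⟨Metric.mem_ball_self hρ, hx₀l.ge⟩
  have htop : x₀ + (ρ / 2) • lastBasis n ∈ K := by
    refine hsub ⟨?_, ?_⟩
    · rw [Metric.mem_ball, hdist]; linarith
    · show 0 ≤ x₀ (Fin.last n) + ρ / 2 * lastBasis n (Fin.last n)
      rw [hx₀l, lastBasis_last]; linarith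
  linarith [hdist ▸ Metric.dist_le_diam_of_mem hK htop hbase]

lemma smul_capInRadiusSet_subset_inRadiusSet {n : ℕ} {θ : ℝ} {K : Set (Amb n)}
    (hc0 : 0 ≤ cos θ) (hc1 : cos θ < 1) :
    (1 - cos θ) • capInRadiusSet n θ K ⊆ inRadiusSet n K := by
  rintro _ ⟨r, ⟨hr, x₀, hx₀, hsub⟩, rfl⟩
  exact ⟨mul_pos (by linarith) hr, x₀, hx₀,
    (ball_inter_upperHalf_subset_capBodyAt hr.le hc0).trans hsub⟩

lemma Ioo_div_sin_subset_capInRadiusSet {n : ℕ} {θ ρ : ℝ} {K : Set (Amb n)}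
    (hρ : ρ ∈ inRadiusSet n K) (hc : 0 ≤ cos θ) (hs : 0 < sin θ) :
    Set.Ioo 0 (ρ / sin θ) ⊆ capInRadiusSet n θ K := by
  obtain ⟨-, x₀, hx₀, hsub⟩ := hρ
  rintro r ⟨hr, hrρ⟩
  refine ⟨hr, x₀, hx₀, fun x hx => hsub ⟨?_, hx.1⟩⟩
  have hxr := capBodyAt_subset_closedBall hx₀ hr.le hc hs.le hx
  rw [lt_div_iff₀ hs] at hrρ
  exact Metric.closedBall_subset_ball hrρ hxr

theorem stmt_5_general (n : ℕ) (θ : ℝ) (hθ : θ ∈ Set.Ioo 0 (π / 2))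
    (K : Set (Amb n)) (hK : IsCapillaryBody n K) :
    (1 - cos θ) * capInRadius n θ K ≤ inRadius n K ∧
    inRadius n K ≤ sin θ * capInRadius n θ K := by
  obtain ⟨hθ0, hθ2⟩ := hθ
  have hs : 0 < sin θ := sin_pos_of_pos_of_lt_pi hθ0 (by linarith [pi_pos])
  have hc0 : 0 < cos θ := cos_pos_of_mem_Ioo ⟨by linarith, hθ2⟩
  have hc1 : cos θ < 1 := by simpa using cos_lt_cos_of_nonneg_of_le_pi le_rfl (by linarith) hθ0
  have hB := bddAbove_inRadiusSet hK.compact.isBounded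
  have hAB := smul_capInRadiusSet_subset_inRadiusSet (K := K) hc0.le hc1
  have hA : BddAbove (capInRadiusSet n θ K) :=
    (bddAbove_smul_iff_of_pos (sub_pos.2 hc1)).1 (hB.mono hAB)
  have hB0 : 0 ≤ inRadius n K := Real.sSup_nonneg fun ρ hρ => hρ.1.le
  have hA0 : 0 ≤ capInRadius n θ K := Real.sSup_nonneg fun r hr => hr.1.le
  rw [inRadius_eq_sSup, capInRadius_eq_sSup] at *
  constructor
  · rw [← smul_eq_mul, ← Real.sSup_smul_of_nonneg (sub_pos.2 hc1).le]
    exact Real.sSup_le (fun ρ hρ => le_csSup hB (hAB hρ)) hB0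
  · refine Real.sSup_le (fun ρ hρ => ?_) (mul_nonneg hs.le hA0)
    have hρs : ρ / sin θ ≤ sSup (capInRadiusSet n θ K) := by
      rw [← csSup_Ioo (div_pos hρ.1 hs)]
      exact csSup_le_csSup hA (nonempty_Ioo.2 (div_pos hρ.1 hs))
        (Ioo_div_sin_subset_capInRadiusSet hρ hc0.le hs)
    calc ρ = sin θ * (ρ / sin θ) := by field_simp
      _ ≤ sin θ * sSup (capInRadiusSet n θ K) := by gcongr

/-- `(1 - cos θ) ρ₋(K, θ) ≤ ρ₋(K) ≤ sin θ · ρ₋(K, θ)` for `θ ∈ (0, π/2)`. -/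
theorem stmt_5 (n : ℕ) (hn : 1 ≤ n) (θ : ℝ) (hθ : θ ∈ Set.Ioo 0 (π / 2))
    (K : Set (Amb n)) (hK : IsCapillaryBody n K) :
    (1 - cos θ) * capInRadius n θ K ≤ inRadius n K ∧
    inRadius n K ≤ sin θ * capInRadius n θ K :=
  stmt_5_general n θ hθ K hK

end
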